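/- arXiv:2209.08768 — 3 statements merged into one kernel-verified Lean document; each statement's English description precedes it below -/
import Mathlib

section
/- Let λ : ℕ → ℝ be a sequence with λ_j ≥ λ_{j+1} + (a/c₀) j^{−a−1} and λ_j ≤ c₀ j^{−a} for all j ≥ 1, for constants a > 1, c₀ > 0. Then there exists a constant c₁ > 0 such that for all j ≥ 1 and all k with 1 ≤ k ≤ 2j, k ≠ j, we have |λ_j − λ_k| ≥ c₁ |j − k| j^{−a−1}. -/
/-- Eigengap lower bound under polynomial decay: if λ_j ≥ λ_{j+1} + (a/c₀) j^{-a-1} and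
λ_j ≤ c₀ j^{-a} for all j ≥ 1, then |λ_j − λ_k| ≥ c₁ |j−k| j^{-a-1} for 1 ≤ k ≤ 2j, k ≠ j. -/
theorem eigengap_lower_bound
    (lam : ℕ → ℝ) (a c₀ : ℝ) (ha : 1 < a) (hc₀ : 0 < c₀)
    (hgap : ∀ j : ℕ, 1 ≤ j → lam j ≥ lam (j + 1) + (a / c₀) * (j : ℝ) ^ (-(a + 1)))
    (hupper : ∀ j : ℕ, 1 ≤ j → lam j ≤ c₀ * (j : ℝ) ^ (-a)) :
    ∃ c₁ > 0, ∀ j : ℕ, 1 ≤ j → ∀ k : ℕ, 1 ≤ k → k ≤ 2 * j → k ≠ j →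
      |lam j - lam k| ≥ c₁ * |(j : ℝ) - (k : ℝ)| * (j : ℝ) ^ (-(a + 1)) := by
  have ha0 : (0:ℝ) < a := lt_trans one_pos ha
  have hdiv : (0:ℝ) < a / c₀ := div_pos ha0 hc₀
  have hexp : -(a + 1) ≤ 0 := by linarith
  have key : ∀ m n : ℕ, 1 ≤ m → m ≤ n →
      lam m - lam n ≥ (a / c₀) * ((n : ℝ) - (m : ℝ)) * (n : ℝ) ^ (-(a + 1)) := by
    intro m n hm hmn
    induction n, hmn using Nat.le_induction with
    | base => simp
    | succ n hn ih =>
      have hn1 : (1:ℕ) ≤ n := le_trans hm hn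
      have hnpos : (0:ℝ) < (n:ℝ) := by exact_mod_cast hn1
      have hgapn := hgap n hn1
      have h1 : ((n:ℝ) + 1) ^ (-(a+1)) ≤ (n:ℝ) ^ (-(a+1)) :=
        Real.rpow_le_rpow_of_nonpos hnpos (by linarith) hexp
      have hX : (0:ℝ) ≤ (n:ℝ) ^ (-(a+1)) := Real.rpow_nonneg (le_of_lt hnpos) _
      have hcoef : (0:ℝ) ≤ (a/c₀) * ((n:ℝ) - (m:ℝ) + 1) := by
        have : (m:ℝ) ≤ (n:ℝ) := by exact_mod_cast hn
        nlinarith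
      have hsum : lam m - lam (n+1) ≥ (a/c₀) * ((n:ℝ) - (m:ℝ) + 1) * (n:ℝ) ^ (-(a+1)) := by
        have hexpand : (a/c₀) * ((n:ℝ) - (m:ℝ) + 1) * (n:ℝ) ^ (-(a+1))
            = (a/c₀) * ((n:ℝ) - (m:ℝ)) * (n:ℝ) ^ (-(a+1)) + (a/c₀) * (n:ℝ) ^ (-(a+1)) := by
          ring
        linarith
      have h2 : (a/c₀) * ((n:ℝ) - (m:ℝ) + 1) * ((n:ℝ) + 1) ^ (-(a+1))
          ≤ (a/c₀) * ((n:ℝ) - (m:ℝ) + 1) * (n:ℝ) ^ (-(a+1)) :=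
        mul_le_mul_of_nonneg_left h1 hcoef
      have hcast : ((n+1 : ℕ) : ℝ) = (n:ℝ) + 1 := by push_cast; ring
      rw [hcast]
      calc (a/c₀) * ((n:ℝ) + 1 - (m:ℝ)) * ((n:ℝ) + 1) ^ (-(a+1))
          = (a/c₀) * ((n:ℝ) - (m:ℝ) + 1) * ((n:ℝ) + 1) ^ (-(a+1)) := by ring
        _ ≤ (a/c₀) * ((n:ℝ) - (m:ℝ) + 1) * (n:ℝ) ^ (-(a+1)) := h2
        _ ≤ lam m - lam (n+1) := hsum
  refine ⟨(a/c₀) * (2:ℝ) ^ (-(a+1)),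
    mul_pos hdiv (Real.rpow_pos_of_pos two_pos _), ?_⟩
  intro j hj k hk hk2 hne
  have hjpos : (0:ℝ) < (j:ℝ) := by exact_mod_cast hj
  have hjX : (0:ℝ) ≤ (j:ℝ) ^ (-(a+1)) := Real.rpow_nonneg (le_of_lt hjpos) _
  rcases lt_or_gt_of_ne hne with hlt | hgt
  · -- k < j
    have hkey := key k j hk (le_of_lt hlt)
    have habsjk : |(j:ℝ) - (k:ℝ)| = (j:ℝ) - (k:ℝ) := by
      apply abs_of_nonneg; have : (k:ℝ) ≤ (j:ℝ) := by exact_mod_cast le_of_lt hlt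
      linarith
    have h2le1 : (2:ℝ) ^ (-(a+1)) ≤ 1 :=
      Real.rpow_le_one_of_one_le_of_nonpos (by norm_num) hexp
    have hjk : (0:ℝ) ≤ (j:ℝ) - (k:ℝ) := by
      have : (k:ℝ) ≤ (j:ℝ) := by exact_mod_cast le_of_lt hlt
      linarith
    have hcoef : (a/c₀) * (2:ℝ)^(-(a+1)) * ((j:ℝ) - (k:ℝ)) * (j:ℝ)^(-(a+1))
        ≤ (a/c₀) * ((j:ℝ) - (k:ℝ)) * (j:ℝ)^(-(a+1)) := by
      have h2pos : (0:ℝ) ≤ (2:ℝ)^(-(a+1)) := Real.rpow_nonneg (by norm_num) _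
      nlinarith [mul_nonneg (mul_nonneg (mul_nonneg (sub_nonneg.mpr h2le1) hdiv.le) hjk) hjX]
    have habs : lam k - lam j ≤ |lam j - lam k| := by
      rw [abs_sub_comm]; exact le_abs_self _
    rw [habsjk]
    calc (a/c₀) * (2:ℝ)^(-(a+1)) * ((j:ℝ) - (k:ℝ)) * (j:ℝ)^(-(a+1))
        ≤ (a/c₀) * ((j:ℝ) - (k:ℝ)) * (j:ℝ)^(-(a+1)) := hcoef
      _ ≤ lam k - lam j := hkey
      _ ≤ |lam j - lam k| := habs
  · -- j < k ≤ 2j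
    have hkey := key j k hj (le_of_lt hgt)
    have habsjk : |(j:ℝ) - (k:ℝ)| = (k:ℝ) - (j:ℝ) := by
      rw [abs_sub_comm]; apply abs_of_nonneg
      have : (j:ℝ) ≤ (k:ℝ) := by exact_mod_cast le_of_lt hgt
      linarith
    have hkj : (0:ℝ) ≤ (k:ℝ) - (j:ℝ) := by
      have : (j:ℝ) ≤ (k:ℝ) := by exact_mod_cast le_of_lt hgt
      linarith
    have hkpos : (0:ℝ) < (k:ℝ) := by exact_mod_cast hk
    have hk2' : (k:ℝ) ≤ 2 * (j:ℝ) := by exact_mod_cast hk2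
    have h1 : (2 * (j:ℝ)) ^ (-(a+1)) ≤ (k:ℝ) ^ (-(a+1)) :=
      Real.rpow_le_rpow_of_nonpos hkpos hk2' hexp
    have hmul : (2 * (j:ℝ)) ^ (-(a+1)) = (2:ℝ)^(-(a+1)) * (j:ℝ)^(-(a+1)) :=
      Real.mul_rpow (by norm_num) (le_of_lt hjpos)
    have hcoef : (0:ℝ) ≤ (a/c₀) * ((k:ℝ) - (j:ℝ)) := mul_nonneg (le_of_lt hdiv) hkj
    have h2 : (a/c₀) * ((k:ℝ) - (j:ℝ)) * ((2:ℝ)^(-(a+1)) * (j:ℝ)^(-(a+1)))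
        ≤ (a/c₀) * ((k:ℝ) - (j:ℝ)) * (k:ℝ)^(-(a+1)) := by
      rw [← hmul]; exact mul_le_mul_of_nonneg_left h1 hcoef
    have habs : lam j - lam k ≤ |lam j - lam k| := le_abs_self _
    rw [habsjk]
    calc (a/c₀) * (2:ℝ)^(-(a+1)) * ((k:ℝ) - (j:ℝ)) * (j:ℝ)^(-(a+1))
        = (a/c₀) * ((k:ℝ) - (j:ℝ)) * ((2:ℝ)^(-(a+1)) * (j:ℝ)^(-(a+1))) := by ring
      _ ≤ (a/c₀) * ((k:ℝ) - (j:ℝ)) * (k:ℝ)^(-(a+1)) := h2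
      _ ≤ lam j - lam k := hkey
      _ ≤ |lam j - lam k| := habs
end

section
/- Let λ : ℕ → ℝ satisfy c₀⁻¹ j^{−a} ≤ λ_j and λ_j ≥ λ_{j+1} + (a/c₀) j^{−a−1}, λ_j ≤ c₀ j^{−a}, for a > 1. Then there is a constant C such that for every j ≥ 1, ∑_{k ≠ j, k ≥ 1} λ_j λ_k / (λ_j − λ_k)² ≤ C j². -/
private lemma esb_gap (lam : ℕ → ℝ) (a c₀ : ℝ) (ha0 : 0 < a) (hc₀ : 0 < c₀)
    (hgap : ∀ j : ℕ, 1 ≤ j → lam j ≥ lam (j + 1) + (a / c₀) * (j : ℝ) ^ (-(a + 1)))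
    (m : ℕ) (hm : 1 ≤ m) : ∀ n : ℕ, m < n →
    a / c₀ * ((n : ℝ) - (m : ℝ)) * (n : ℝ) ^ (-(a + 1)) ≤ lam m - lam n := by
  intro n hmn
  have hac : 0 < a / c₀ := div_pos ha0 hc₀
  induction n, hmn using Nat.le_induction with
  | base =>
      have h := hgap m hm
      have hm0 : (0 : ℝ) < (m : ℝ) := by exact_mod_cast hm
      have hmono : ((m : ℝ) + 1) ^ (-(a + 1)) ≤ (m : ℝ) ^ (-(a + 1)) :=
        Real.rpow_le_rpow_of_nonpos hm0 (by linarith) (by linarith)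
      have e1 : a / c₀ * ((m : ℝ) + 1) ^ (-(a + 1)) ≤ a / c₀ * (m : ℝ) ^ (-(a + 1)) :=
        mul_le_mul_of_nonneg_left hmono hac.le
      push_cast
      rw [show ((m : ℝ) + 1) - (m : ℝ) = 1 from by ring, mul_one]
      linarith
  | succ n hn ih =>
      have hn1 : 1 ≤ n := le_trans hm (Nat.le_of_succ_le hn)
      have hn0 : (0 : ℝ) < (n : ℝ) := by exact_mod_cast hn1
      have h1 := hgap n hn1
      have hmono : ((n : ℝ) + 1) ^ (-(a + 1)) ≤ (n : ℝ) ^ (-(a + 1)) :=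
        Real.rpow_le_rpow_of_nonpos hn0 (by linarith) (by linarith)
      have hnm : (0 : ℝ) ≤ (n : ℝ) - (m : ℝ) := by
        have : (m : ℝ) ≤ (n : ℝ) := by exact_mod_cast Nat.le_of_succ_le hn
        linarith
      push_cast
      calc a / c₀ * ((n : ℝ) + 1 - (m : ℝ)) * ((n : ℝ) + 1) ^ (-(a + 1))
          = a / c₀ * ((n : ℝ) - (m : ℝ)) * ((n : ℝ) + 1) ^ (-(a + 1))
            + a / c₀ * ((n : ℝ) + 1) ^ (-(a + 1)) := by ring
        _ ≤ a / c₀ * ((n : ℝ) - (m : ℝ)) * (n : ℝ) ^ (-(a + 1))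
            + a / c₀ * (n : ℝ) ^ (-(a + 1)) := by
            exact add_le_add
              (mul_le_mul_of_nonneg_left hmono (mul_nonneg hac.le hnm))
              (mul_le_mul_of_nonneg_left hmono hac.le)
        _ ≤ (lam m - lam n) + (lam n - lam (n + 1)) := add_le_add ih (by linarith)
        _ = lam m - lam (n + 1) := by ring

set_option maxHeartbeats 1600000 in
/-- Key summability bound: under the polynomial spacing assumption on eigenvalues,
∑_{k≥1, k≠j} λ_j λ_k / (λ_j − λ_k)² ≤ C j². -/
theorem eigenvalue_sum_bound
    (lam : ℕ → ℝ) (a c₀ : ℝ) (ha : 1 < a) (hc₀ : 0 < c₀)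
    (hlower : ∀ j : ℕ, 1 ≤ j → c₀⁻¹ * (j : ℝ) ^ (-a) ≤ lam j)
    (hupper : ∀ j : ℕ, 1 ≤ j → lam j ≤ c₀ * (j : ℝ) ^ (-a))
    (hgap : ∀ j : ℕ, 1 ≤ j → lam j ≥ lam (j + 1) + (a / c₀) * (j : ℝ) ^ (-(a + 1))) :
    ∃ C > 0, ∀ j : ℕ, 1 ≤ j →
      (∑' k : ℕ, if 1 ≤ k ∧ k ≠ j then lam j * lam k / (lam j - lam k) ^ 2 else 0)
        ≤ C * (j : ℝ) ^ 2 := by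
  have ha0 : 0 < a := lt_trans one_pos ha
  obtain ⟨b, hbdef⟩ : ∃ b : ℝ, b = min a 2 := ⟨_, rfl⟩
  have hb1 : 1 < b := by rw [hbdef]; exact lt_min ha one_lt_two
  have hba : b ≤ a := by rw [hbdef]; exact min_le_left _ _
  have hb2 : b ≤ 2 := by rw [hbdef]; exact min_le_right _ _
  have hsumb : Summable (fun n : ℕ => ((n : ℝ) ^ b)⁻¹) := Real.summable_nat_rpow_inv.mpr hb1
  have hsum2 : Summable (fun n : ℕ => ((n : ℝ) ^ 2)⁻¹) := Real.summable_nat_pow_inv.mpr one_lt_two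
  have hlampos : ∀ k : ℕ, 1 ≤ k → 0 < lam k := by
    intro k hk
    have hk0 : (0 : ℝ) < (k : ℝ) := by exact_mod_cast hk
    have := hlower k hk
    have : 0 < c₀⁻¹ * (k : ℝ) ^ (-a) := by positivity
    linarith [hlower k hk]
  obtain ⟨Z2, hZ2def⟩ : ∃ Z : ℝ, Z = ∑' n : ℕ, ((n : ℝ) ^ 2)⁻¹ := ⟨_, rfl⟩
  obtain ⟨Zb, hZbdef⟩ : ∃ Z : ℝ, Z = ∑' n : ℕ, ((n : ℝ) ^ b)⁻¹ := ⟨_, rfl⟩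
  have hZ2 : 0 ≤ Z2 := by rw [hZ2def]; exact tsum_nonneg fun n => by positivity
  have hZb : 0 ≤ Zb := by rw [hZbdef]; exact tsum_nonneg fun n => by positivity
  obtain ⟨K, hKdef⟩ : ∃ K : ℝ,
      K = 2 + 4 * c₀ ^ 2 + 2 * c₀ ^ 6 / a ^ 2 * (1 + (2 * c₀ ^ 2) ^ ((2 : ℝ) / a)) := ⟨_, rfl⟩
  have hrpownn : (0:ℝ) ≤ (2 * c₀ ^ 2) ^ ((2 : ℝ) / a) := Real.rpow_nonneg (by positivity) _
  have hKpos : 0 < K := by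
    have h1 : (0:ℝ) < 2 * c₀ ^ 6 / a ^ 2 := by positivity
    nlinarith [hKdef, sq_nonneg c₀, mul_nonneg h1.le hrpownn]
  have hK2 : 2 ≤ K := by nlinarith [hKdef, sq_nonneg c₀, mul_nonneg (by positivity : (0:ℝ) ≤ 2 * c₀ ^ 6 / a ^ 2) hrpownn, (by positivity : (0:ℝ) < 2 * c₀ ^ 6 / a ^ 2)]
  have hK4 : 4 * c₀ ^ 2 ≤ K := by nlinarith [hKdef, mul_nonneg (by positivity : (0:ℝ) ≤ 2 * c₀ ^ 6 / a ^ 2) hrpownn, (by positivity : (0:ℝ) < 2 * c₀ ^ 6 / a ^ 2), sq_nonneg c₀]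
  have hKA : 2 * c₀ ^ 6 / a ^ 2 ≤ K := by nlinarith [hKdef, mul_nonneg (by positivity : (0:ℝ) ≤ 2 * c₀ ^ 6 / a ^ 2) hrpownn, sq_nonneg c₀]
  have hKB : 2 * c₀ ^ 6 / a ^ 2 * (2 * c₀ ^ 2) ^ ((2 : ℝ) / a) ≤ K := by
    nlinarith [hKdef, sq_nonneg c₀, (by positivity : (0:ℝ) < 2 * c₀ ^ 6 / a ^ 2)]
  have hCnn : 0 ≤ K * (2 * Z2 + Zb) := mul_nonneg hKpos.le (by linarith)
  refine ⟨K * (2 * Z2 + Zb) + 1, by linarith, ?_⟩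
  intro j hj
  have hj1 : (1 : ℝ) ≤ (j : ℝ) := by exact_mod_cast hj
  have hJ0 : (0 : ℝ) < (j : ℝ) := lt_of_lt_of_le one_pos hj1
  obtain ⟨d, hddef⟩ : ∃ d : ℕ → ℝ,
      d = fun k => if k = j then 0 else (((k : ℝ) - (j : ℝ)) ^ 2)⁻¹ := ⟨_, rfl⟩
  obtain ⟨e, hedef⟩ : ∃ e : ℕ → ℝ, e = fun k : ℕ => ((k : ℝ) ^ b)⁻¹ := ⟨_, rfl⟩
  have hd0 : ∀ k, 0 ≤ d k := by
    intro k
    by_cases h : k = j <;> simp only [hddef, h, ite_true, ite_false] <;> positivity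
  have he0 : ∀ k, 0 ≤ e k := fun k => by rw [hedef]; positivity
  have hdshift : ∀ k : ℕ, d (k + j) = ((k : ℝ) ^ 2)⁻¹ := by
    intro k
    rcases Nat.eq_zero_or_pos k with rfl | hk
    · simp [hddef]
    · have hne : k + j ≠ j := by omega
      simp only [hddef, if_neg hne]
      congr 1
      push_cast
      ring
  have hsumd : Summable d := by
    rw [← summable_nat_add_iff j]
    exact (funext hdshift : (fun n : ℕ => d (n + j)) = _) ▸ hsum2
  have hsume : Summable e := by rw [hedef]; exact hsumb
  have htd : ∑' k, d k ≤ 2 * Z2 := by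
    have hsplit := Summable.sum_add_tsum_nat_add (f := d) j hsumd
    have htail : ∑' k : ℕ, d (k + j) = Z2 := by
      rw [tsum_congr hdshift]
      exact hZ2def.symm
    have hsum2' : Summable (fun i : ℕ => (((i : ℝ) + 1) ^ 2)⁻¹) := by
      have := (summable_nat_add_iff 1).mpr hsum2
      refine this.congr fun i => ?_
      push_cast
      ring
    have hhead : ∑ i ∈ Finset.range j, d i ≤ Z2 := by
      have hrefl := Finset.sum_range_reflect d j
      have heq : ∀ i ∈ Finset.range j, d (j - 1 - i) = (((i : ℝ) + 1) ^ 2)⁻¹ := by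
        intro i hi
        rw [Finset.mem_range] at hi
        have h3 : j - 1 - i = j - (i + 1) := by omega
        have h2 : ((j - (i + 1) : ℕ) : ℝ) = (j : ℝ) - ((i : ℝ) + 1) := by
          rw [Nat.cast_sub (by omega)]
          push_cast
          ring
        rw [h3]
        simp only [hddef, if_neg (show j - (i + 1) ≠ j by omega)]
        rw [h2]
        congr 1
        ring
      calc ∑ i ∈ Finset.range j, d i = ∑ i ∈ Finset.range j, d (j - 1 - i) := hrefl.symm
        _ = ∑ i ∈ Finset.range j, (((i : ℝ) + 1) ^ 2)⁻¹ := Finset.sum_congr rfl heq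
        _ ≤ ∑' i : ℕ, (((i : ℝ) + 1) ^ 2)⁻¹ :=
            Summable.sum_le_tsum _ (fun i _ => by positivity) hsum2'
        _ = Z2 := by
            have hz : ((((0:ℕ)) : ℝ) ^ 2)⁻¹ = 0 := by norm_num
            rw [hZ2def, Summable.tsum_eq_zero_add hsum2, hz, zero_add]
            exact tsum_congr fun i => by push_cast; ring
    linarith [hsplit, htail, hhead]
  have hte : ∑' k, e k = Zb := by rw [hedef, hZbdef]
  have key : ∀ k : ℕ, 1 ≤ k → k ≠ j →
      lam j * lam k / (lam j - lam k) ^ 2 ≤ K * (j : ℝ) ^ 2 * (d k + e k) := by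
    intro k hk1 hkj
    have hX1 : (1 : ℝ) ≤ (k : ℝ) := by exact_mod_cast hk1
    have hX0 : (0 : ℝ) < (k : ℝ) := lt_of_lt_of_le one_pos hX1
    have hPj : (0 : ℝ) < (j : ℝ) ^ (-a) := Real.rpow_pos_of_pos hJ0 _
    have hPk : (0 : ℝ) < (k : ℝ) ^ (-a) := Real.rpow_pos_of_pos hX0 _
    have hLj := hlampos j hj
    have hLk := hlampos k hk1
    have hdk : d k = (((k : ℝ) - (j : ℝ)) ^ 2)⁻¹ := by
      simp only [hddef]; rw [if_neg hkj]
    have hek : e k = ((k : ℝ) ^ b)⁻¹ := by simp only [hedef]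
    have finish : ∀ c : ℝ, 0 ≤ c → c ≤ K →
        lam j * lam k / (lam j - lam k) ^ 2 ≤ c * (j : ℝ) ^ 2 * d k →
        lam j * lam k / (lam j - lam k) ^ 2 ≤ K * (j : ℝ) ^ 2 * (d k + e k) := by
      intro c hc hcK h
      calc lam j * lam k / (lam j - lam k) ^ 2 ≤ c * (j : ℝ) ^ 2 * d k := h
        _ ≤ K * (j : ℝ) ^ 2 * d k :=
          mul_le_mul_of_nonneg_right
            (mul_le_mul_of_nonneg_right hcK (sq_nonneg _)) (hd0 k)
        _ ≤ K * (j : ℝ) ^ 2 * (d k + e k) :=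
          mul_le_mul_of_nonneg_left (le_add_of_nonneg_right (he0 k))
            (mul_nonneg hKpos.le (sq_nonneg _))
    rcases lt_or_gt_of_ne hkj with hlt | hlt
    · -- k < j
      have hXJ : (k : ℝ) < (j : ℝ) := by exact_mod_cast hlt
      have hgapkj := esb_gap lam a c₀ ha0 hc₀ hgap k hk1 j hlt
      by_cases hc2 : 2 * c₀ ^ 2 * (j : ℝ) ^ (-a) ≤ (k : ℝ) ^ (-a)
      · -- far left
        have e3 : c₀ * (j : ℝ) ^ (-a) ≤ c₀⁻¹ * (k : ℝ) ^ (-a) / 2 := by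
          calc c₀ * (j : ℝ) ^ (-a) = (2 * c₀)⁻¹ * (2 * c₀ ^ 2 * (j : ℝ) ^ (-a)) := by
                field_simp
            _ ≤ (2 * c₀)⁻¹ * ((k : ℝ) ^ (-a)) := mul_le_mul_of_nonneg_left hc2 (by positivity)
            _ = c₀⁻¹ * (k : ℝ) ^ (-a) / 2 := by rw [mul_inv]; ring
        have h1 : lam j ≤ lam k / 2 := by
          have u1 := hupper j hj; have u2 := hlower k hk1; linarith
        have h3 : (lam k / 2) ^ 2 ≤ (lam j - lam k) ^ 2 := by
          have hsw : (lam j - lam k) ^ 2 = (lam k - lam j) ^ 2 := by ring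
          rw [hsw]
          exact pow_le_pow_left₀ (by positivity) (by linarith) 2
        have hF : lam j * lam k / (lam j - lam k) ^ 2 ≤ 2 := by
          rw [div_le_iff₀ (lt_of_lt_of_le (by positivity) h3)]
          nlinarith [mul_le_mul_of_nonneg_right h1 hLk.le, h3]
        apply finish 2 (by norm_num) hK2
        have hJX2 : ((k : ℝ) - (j : ℝ)) ^ 2 ≤ (j : ℝ) ^ 2 := by
          nlinarith [mul_pos hX0 (show (0:ℝ) < 2 * (j : ℝ) - (k : ℝ) by linarith)]
        have hpos2 : (0:ℝ) < ((k : ℝ) - (j : ℝ)) ^ 2 :=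
          lt_of_le_of_ne (sq_nonneg _) (Ne.symm (pow_ne_zero 2 (sub_ne_zero_of_ne (ne_of_lt hXJ))))
        have hd1 : 1 ≤ (j : ℝ) ^ 2 * d k := by
          rw [hdk, ← div_eq_mul_inv]
          exact (one_le_div hpos2).mpr hJX2
        calc lam j * lam k / (lam j - lam k) ^ 2 ≤ 2 := hF
          _ ≤ 2 * ((j : ℝ) ^ 2 * d k) := le_mul_of_one_le_right (by norm_num) hd1
          _ = 2 * (j : ℝ) ^ 2 * d k := by ring
      · -- near left
        push_neg at hc2
        have hJXpos : (0:ℝ) < (j : ℝ) - (k : ℝ) := by linarith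
        have hPj1 : (0:ℝ) < (j : ℝ) ^ (-(a + 1)) := Real.rpow_pos_of_pos hJ0 _
        have hgpos : 0 < a / c₀ * ((j : ℝ) - (k : ℝ)) * (j : ℝ) ^ (-(a + 1)) := by positivity
        have hnum : lam j * lam k ≤ 2 * c₀ ^ 4 * ((j : ℝ) ^ (-a)) ^ 2 := by
          have u1 := hupper j hj
          have u2 := hupper k hk1
          have e4 : lam k ≤ 2 * c₀ ^ 3 * (j : ℝ) ^ (-a) := by
            nlinarith [mul_lt_mul_of_pos_left hc2 hc₀]
          nlinarith [mul_le_mul u1 e4 hLk.le (by positivity : (0:ℝ) ≤ c₀ * (j : ℝ) ^ (-a))]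
        have hden : (a / c₀ * ((j : ℝ) - (k : ℝ)) * (j : ℝ) ^ (-(a + 1))) ^ 2
            ≤ (lam j - lam k) ^ 2 := by
          have hsw : (lam j - lam k) ^ 2 = (lam k - lam j) ^ 2 := by ring
          rw [hsw]
          exact pow_le_pow_left₀ hgpos.le hgapkj 2
        have hF : lam j * lam k / (lam j - lam k) ^ 2
            ≤ 2 * c₀ ^ 4 * ((j : ℝ) ^ (-a)) ^ 2
              / (a / c₀ * ((j : ℝ) - (k : ℝ)) * (j : ℝ) ^ (-(a + 1))) ^ 2 :=
          div_le_div₀ (by positivity) hnum (by positivity) hden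
        have hrw : (j : ℝ) ^ (-(a + 1)) * (j : ℝ) = (j : ℝ) ^ (-a) := by
          rw [← Real.rpow_add_one (ne_of_gt hJ0)]
          congr 1
          ring
        have hRHS : 2 * c₀ ^ 4 * ((j : ℝ) ^ (-a)) ^ 2
              / (a / c₀ * ((j : ℝ) - (k : ℝ)) * (j : ℝ) ^ (-(a + 1))) ^ 2
            = 2 * c₀ ^ 6 / a ^ 2 * (j : ℝ) ^ 2 * (((k : ℝ) - (j : ℝ)) ^ 2)⁻¹ := by
          rw [← hrw]
          have h1 : (j : ℝ) ^ (-(a + 1)) ≠ 0 := ne_of_gt hPj1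
          have h2 : (j : ℝ) - (k : ℝ) ≠ 0 := ne_of_gt hJXpos
          have h3 : ((k : ℝ) - (j : ℝ)) ^ 2 = ((j : ℝ) - (k : ℝ)) ^ 2 := by ring
          have ha' : a ≠ 0 := ne_of_gt ha0
          rw [h3]
          field_simp
        apply finish (2 * c₀ ^ 6 / a ^ 2) (by positivity) hKA
        rw [hdk]
        exact le_of_le_of_eq hF hRHS
    · -- j < k
      have hJX : (j : ℝ) < (k : ℝ) := by exact_mod_cast hlt
      have hgapjk := esb_gap lam a c₀ ha0 hc₀ hgap j hj k hlt
      by_cases hc2 : 2 * c₀ ^ 2 * (k : ℝ) ^ (-a) ≤ (j : ℝ) ^ (-a)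
      · -- far right
        have e3 : c₀ * (k : ℝ) ^ (-a) ≤ c₀⁻¹ * (j : ℝ) ^ (-a) / 2 := by
          calc c₀ * (k : ℝ) ^ (-a) = (2 * c₀)⁻¹ * (2 * c₀ ^ 2 * (k : ℝ) ^ (-a)) := by
                field_simp
            _ ≤ (2 * c₀)⁻¹ * ((j : ℝ) ^ (-a)) := mul_le_mul_of_nonneg_left hc2 (by positivity)
            _ = c₀⁻¹ * (j : ℝ) ^ (-a) / 2 := by rw [mul_inv]; ring
        have h1 : lam k ≤ lam j / 2 := by
          have u1 := hupper k hk1; have u2 := hlower j hj; linarith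
        have h3 : (lam j / 2) ^ 2 ≤ (lam j - lam k) ^ 2 :=
          pow_le_pow_left₀ (by positivity) (by linarith) 2
        have hF : lam j * lam k / (lam j - lam k) ^ 2 ≤ lam j * lam k / (lam j / 2) ^ 2 :=
          div_le_div₀ (mul_nonneg hLj.le hLk.le) le_rfl (by positivity) h3
        have hLjne : lam j ≠ 0 := ne_of_gt hLj
        have hF2 : lam j * lam k / (lam j / 2) ^ 2 = 4 * (lam k / lam j) := by
          field_simp
          ring
        have hF3 : lam k / lam j ≤ c₀ * (k : ℝ) ^ (-a) / (c₀⁻¹ * (j : ℝ) ^ (-a)) :=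
          div_le_div₀ (by positivity) (hupper k hk1) (by positivity) (hlower j hj)
        have hEa : c₀ * (k : ℝ) ^ (-a) / (c₀⁻¹ * (j : ℝ) ^ (-a))
            = c₀ ^ 2 * ((j : ℝ) ^ a * (k : ℝ) ^ (-a)) := by
          rw [Real.rpow_neg hJ0.le a]
          have hja : (j : ℝ) ^ a ≠ 0 := ne_of_gt (Real.rpow_pos_of_pos hJ0 a)
          field_simp
        have hexp : (j : ℝ) ^ a * (k : ℝ) ^ (-a) ≤ (j : ℝ) ^ 2 * ((k : ℝ) ^ b)⁻¹ := by
          have hq0 : 0 < (j : ℝ) / (k : ℝ) := by positivity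
          have hq1 : (j : ℝ) / (k : ℝ) ≤ 1 := div_le_one_of_le₀ hJX.le hX0.le
          have hda : ((j : ℝ) / (k : ℝ)) ^ a = (j : ℝ) ^ a * (k : ℝ) ^ (-a) := by
            rw [Real.div_rpow hJ0.le hX0.le, Real.rpow_neg hX0.le, div_eq_mul_inv]
          have hdb : ((j : ℝ) / (k : ℝ)) ^ b = (j : ℝ) ^ b * ((k : ℝ) ^ b)⁻¹ := by
            rw [Real.div_rpow hJ0.le hX0.le, div_eq_mul_inv]
          have hmono : ((j : ℝ) / (k : ℝ)) ^ a ≤ ((j : ℝ) / (k : ℝ)) ^ b :=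
            Real.rpow_le_rpow_of_exponent_ge hq0 hq1 hba
          have hjb : (j : ℝ) ^ b ≤ (j : ℝ) ^ 2 := by
            have h2 := Real.rpow_le_rpow_of_exponent_le hj1 hb2
            rwa [show ((2:ℝ)) = ((2:ℕ) : ℝ) by norm_num, Real.rpow_natCast] at h2
          have hkbinv : (0:ℝ) ≤ ((k : ℝ) ^ b)⁻¹ := by positivity
          calc (j : ℝ) ^ a * (k : ℝ) ^ (-a) = ((j : ℝ) / (k : ℝ)) ^ a := hda.symm
            _ ≤ ((j : ℝ) / (k : ℝ)) ^ b := hmono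
            _ = (j : ℝ) ^ b * ((k : ℝ) ^ b)⁻¹ := hdb
            _ ≤ (j : ℝ) ^ 2 * ((k : ℝ) ^ b)⁻¹ := mul_le_mul_of_nonneg_right hjb hkbinv
        calc lam j * lam k / (lam j - lam k) ^ 2 ≤ 4 * (lam k / lam j) := hF.trans_eq hF2
          _ ≤ 4 * (c₀ ^ 2 * ((j : ℝ) ^ a * (k : ℝ) ^ (-a))) := by
              have h4 := hF3.trans_eq hEa
              linarith
          _ ≤ 4 * (c₀ ^ 2 * ((j : ℝ) ^ 2 * ((k : ℝ) ^ b)⁻¹)) := by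
              have h5 := mul_le_mul_of_nonneg_left hexp (by positivity : (0:ℝ) ≤ c₀ ^ 2)
              linarith
          _ = 4 * c₀ ^ 2 * (j : ℝ) ^ 2 * e k := by rw [hek]; ring
          _ ≤ K * (j : ℝ) ^ 2 * e k :=
              mul_le_mul_of_nonneg_right
                (mul_le_mul_of_nonneg_right hK4 (sq_nonneg _)) (he0 k)
          _ ≤ K * (j : ℝ) ^ 2 * (d k + e k) :=
              mul_le_mul_of_nonneg_left (le_add_of_nonneg_left (hd0 k))
                (mul_nonneg hKpos.le (sq_nonneg _))
      · -- near right
        push_neg at hc2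
        have hXJpos : (0:ℝ) < (k : ℝ) - (j : ℝ) := by linarith
        have hPk1 : (0:ℝ) < (k : ℝ) ^ (-(a + 1)) := Real.rpow_pos_of_pos hX0 _
        have hgpos : 0 < a / c₀ * ((k : ℝ) - (j : ℝ)) * (k : ℝ) ^ (-(a + 1)) := by positivity
        have hnum : lam j * lam k ≤ 2 * c₀ ^ 4 * ((k : ℝ) ^ (-a)) ^ 2 := by
          have u1 := hupper j hj
          have u2 := hupper k hk1
          have e4 : lam j ≤ 2 * c₀ ^ 3 * (k : ℝ) ^ (-a) := by
            nlinarith [mul_lt_mul_of_pos_left hc2 hc₀]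
          nlinarith [mul_le_mul e4 u2 hLk.le (by positivity : (0:ℝ) ≤ 2 * c₀ ^ 3 * (k : ℝ) ^ (-a))]
        have hden : (a / c₀ * ((k : ℝ) - (j : ℝ)) * (k : ℝ) ^ (-(a + 1))) ^ 2
            ≤ (lam j - lam k) ^ 2 := pow_le_pow_left₀ hgpos.le hgapjk 2
        have hF : lam j * lam k / (lam j - lam k) ^ 2
            ≤ 2 * c₀ ^ 4 * ((k : ℝ) ^ (-a)) ^ 2
              / (a / c₀ * ((k : ℝ) - (j : ℝ)) * (k : ℝ) ^ (-(a + 1))) ^ 2 :=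
          div_le_div₀ (by positivity) hnum (by positivity) hden
        have hrw : (k : ℝ) ^ (-(a + 1)) * (k : ℝ) = (k : ℝ) ^ (-a) := by
          rw [← Real.rpow_add_one (ne_of_gt hX0)]
          congr 1
          ring
        have hRHS : 2 * c₀ ^ 4 * ((k : ℝ) ^ (-a)) ^ 2
              / (a / c₀ * ((k : ℝ) - (j : ℝ)) * (k : ℝ) ^ (-(a + 1))) ^ 2
            = 2 * c₀ ^ 6 / a ^ 2 * (k : ℝ) ^ 2 * (((k : ℝ) - (j : ℝ)) ^ 2)⁻¹ := by
          rw [← hrw]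
          have h1 : (k : ℝ) ^ (-(a + 1)) ≠ 0 := ne_of_gt hPk1
          have h2 : (k : ℝ) - (j : ℝ) ≠ 0 := ne_of_gt hXJpos
          have ha' : a ≠ 0 := ne_of_gt ha0
          field_simp
        have hpja : (0:ℝ) < (j : ℝ) ^ a := Real.rpow_pos_of_pos hJ0 a
        have hpka : (0:ℝ) < (k : ℝ) ^ a := Real.rpow_pos_of_pos hX0 a
        have h1' : (k : ℝ) ^ a ≤ 2 * c₀ ^ 2 * (j : ℝ) ^ a := by
          have cj : (j : ℝ) ^ (-a) * (j : ℝ) ^ a = 1 := by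
            rw [← Real.rpow_add hJ0]; norm_num
          have ck : (k : ℝ) ^ (-a) * (k : ℝ) ^ a = 1 := by
            rw [← Real.rpow_add hX0]; norm_num
          have hkey := mul_lt_mul_of_pos_right hc2 (mul_pos hpja hpka)
          have lhs : (j : ℝ) ^ (-a) * ((j : ℝ) ^ a * (k : ℝ) ^ a) = (k : ℝ) ^ a := by
            rw [← mul_assoc, cj, one_mul]
          have rhs : 2 * c₀ ^ 2 * (k : ℝ) ^ (-a) * ((j : ℝ) ^ a * (k : ℝ) ^ a)
              = 2 * c₀ ^ 2 * (j : ℝ) ^ a := by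
            calc 2 * c₀ ^ 2 * (k : ℝ) ^ (-a) * ((j : ℝ) ^ a * (k : ℝ) ^ a)
                = 2 * c₀ ^ 2 * (j : ℝ) ^ a * ((k : ℝ) ^ (-a) * (k : ℝ) ^ a) := by ring
              _ = 2 * c₀ ^ 2 * (j : ℝ) ^ a := by rw [ck, mul_one]
          rw [lhs, rhs] at hkey
          exact hkey.le
        have h2' : (k : ℝ) ≤ (2 * c₀ ^ 2) ^ a⁻¹ * (j : ℝ) := by
          calc (k : ℝ) = ((k : ℝ) ^ a) ^ a⁻¹ := by
                rw [← Real.rpow_mul hX0.le, mul_inv_cancel₀ (ne_of_gt ha0), Real.rpow_one]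
            _ ≤ (2 * c₀ ^ 2 * (j : ℝ) ^ a) ^ a⁻¹ :=
                Real.rpow_le_rpow hpka.le h1' (by positivity)
            _ = (2 * c₀ ^ 2) ^ a⁻¹ * (j : ℝ) := by
                rw [Real.mul_rpow (by positivity) hpja.le, ← Real.rpow_mul hJ0.le,
                  mul_inv_cancel₀ (ne_of_gt ha0), Real.rpow_one]
        have h3' : (k : ℝ) ^ 2 ≤ (2 * c₀ ^ 2) ^ ((2:ℝ) / a) * (j : ℝ) ^ 2 := by
          have hsq := pow_le_pow_left₀ hX0.le h2' 2
          have hpow : ((2 * c₀ ^ 2) ^ a⁻¹) ^ 2 = (2 * c₀ ^ 2) ^ ((2:ℝ) / a) := by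
            rw [← Real.rpow_natCast ((2 * c₀ ^ 2) ^ a⁻¹) 2, ← Real.rpow_mul (by positivity)]
            congr 1
            push_cast
            field_simp
          have hh : ((2 * c₀ ^ 2) ^ a⁻¹ * (j : ℝ)) ^ 2
              = (2 * c₀ ^ 2) ^ ((2:ℝ) / a) * (j : ℝ) ^ 2 := by
            calc ((2 * c₀ ^ 2) ^ a⁻¹ * (j : ℝ)) ^ 2
                = ((2 * c₀ ^ 2) ^ a⁻¹) ^ 2 * (j : ℝ) ^ 2 := by ring
              _ = _ := by rw [hpow]
          linarith [hh ▸ hsq]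
        apply finish (2 * c₀ ^ 6 / a ^ 2 * (2 * c₀ ^ 2) ^ ((2:ℝ) / a)) (by positivity) hKB
        rw [hdk]
        have hiv : (0:ℝ) ≤ (((k : ℝ) - (j : ℝ)) ^ 2)⁻¹ := by positivity
        calc lam j * lam k / (lam j - lam k) ^ 2
            ≤ 2 * c₀ ^ 6 / a ^ 2 * (k : ℝ) ^ 2 * (((k : ℝ) - (j : ℝ)) ^ 2)⁻¹ :=
              le_of_le_of_eq hF hRHS
          _ ≤ 2 * c₀ ^ 6 / a ^ 2 * ((2 * c₀ ^ 2) ^ ((2:ℝ) / a) * (j : ℝ) ^ 2)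
              * (((k : ℝ) - (j : ℝ)) ^ 2)⁻¹ := by
              have h6 := mul_le_mul_of_nonneg_left h3'
                (by positivity : (0:ℝ) ≤ 2 * c₀ ^ 6 / a ^ 2)
              exact mul_le_mul_of_nonneg_right h6 hiv
          _ = 2 * c₀ ^ 6 / a ^ 2 * (2 * c₀ ^ 2) ^ ((2:ℝ) / a) * (j : ℝ) ^ 2
              * (((k : ℝ) - (j : ℝ)) ^ 2)⁻¹ := by ring
  have hgnonneg : ∀ k, 0 ≤ K * (j : ℝ) ^ 2 * (d k + e k) := fun k =>
    mul_nonneg (mul_nonneg hKpos.le (sq_nonneg _)) (add_nonneg (hd0 k) (he0 k))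
  have hpt : ∀ k : ℕ, (if 1 ≤ k ∧ k ≠ j then lam j * lam k / (lam j - lam k) ^ 2 else 0)
      ≤ K * (j : ℝ) ^ 2 * (d k + e k) := by
    intro k
    by_cases hk : 1 ≤ k ∧ k ≠ j
    · rw [if_pos hk]; exact key k hk.1 hk.2
    · rw [if_neg hk]; exact hgnonneg k
  have hfnn : ∀ k : ℕ,
      0 ≤ (if 1 ≤ k ∧ k ≠ j then lam j * lam k / (lam j - lam k) ^ 2 else 0) := by
    intro k
    by_cases hk : 1 ≤ k ∧ k ≠ j
    · rw [if_pos hk]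
      exact div_nonneg (mul_nonneg (hlampos j hj).le (hlampos k hk.1).le) (sq_nonneg _)
    · rw [if_neg hk]
  have hsumg : Summable (fun k => K * (j : ℝ) ^ 2 * (d k + e k)) := (hsumd.add hsume).mul_left _
  have hsumf : Summable
      (fun k : ℕ => if 1 ≤ k ∧ k ≠ j then lam j * lam k / (lam j - lam k) ^ 2 else 0) :=
    Summable.of_nonneg_of_le hfnn hpt hsumg
  calc (∑' k : ℕ, if 1 ≤ k ∧ k ≠ j then lam j * lam k / (lam j - lam k) ^ 2 else 0)
      ≤ ∑' k : ℕ, K * (j : ℝ) ^ 2 * (d k + e k) := Summable.tsum_le_tsum hpt hsumf hsumg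
    _ = K * (j : ℝ) ^ 2 * ∑' k, (d k + e k) := tsum_mul_left
    _ = K * (j : ℝ) ^ 2 * ((∑' k, d k) + ∑' k, e k) := by rw [Summable.tsum_add hsumd hsume]
    _ ≤ K * (j : ℝ) ^ 2 * (2 * Z2 + Zb) := by
        apply mul_le_mul_of_nonneg_left _ (mul_nonneg hKpos.le (sq_nonneg _))
        rw [hte]
        linarith [htd]
    _ = K * (2 * Z2 + Zb) * (j : ℝ) ^ 2 := by ring
    _ ≤ (K * (2 * Z2 + Zb) + 1) * (j : ℝ) ^ 2 :=
        mul_le_mul_of_nonneg_right (by linarith) (sq_nonneg _)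
end

section
/- With the eigenvalue perturbation identity above, if additionally ‖Ĉ‖ ≤ M and |λ̂_j| ≤ M, then |λ̂_j − λ_j − ⟨(Ĉ−C)φ_j, φ_j⟩| ≤ 2M ‖(P̂_j − P_j)φ_j‖² ≤ 2M ‖φ̂_j − φ_j‖². -/
/-!
The operator `S = Ĉ - λ̂ I` is symmetric, kills `φ̂`, and has norm at most `2M`. The residual
`λ̂ - λ - ⟪(Ĉ - C) φ, φ⟫` equals `-⟪S φ, φ⟫`, and since `S φ̂ = 0` the quadratic form of `S` does not
change when a multiple of `φ̂` is subtracted from `φ`. Taking `w = φ - ⟪φ̂, φ⟫ φ̂` gives the bound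
`‖S‖ ‖w‖² ≤ 2M ‖w‖²`; and `⟪φ̂, φ⟫ φ̂` is the best approximation of `φ` on the line through `φ̂`, so
`‖w‖ ≤ ‖φ - φ̂‖`.
-/

open RealInnerProductSpace

theorem LinearMap.IsSymmetric.inner_map_sub_smul_self_of_map_eq_zero
    {𝕜 E : Type*} [RCLike 𝕜] [NormedAddCommGroup E] [InnerProductSpace 𝕜 E]
    {S : E →ₗ[𝕜] E} (hS : S.IsSymmetric) {u : E} (hSu : S u = 0) (x : E) (c : 𝕜) :
    inner 𝕜 (S (x - c • u)) (x - c • u) = inner 𝕜 (S x) x := by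
  rw [map_sub, map_smul, hSu, smul_zero, sub_zero, inner_sub_right, inner_smul_right, hS x u, hSu,
    inner_zero_right, mul_zero, sub_zero]

theorem norm_sub_inner_smul_le_norm_sub_smul
    {𝕜 E : Type*} [RCLike 𝕜] [NormedAddCommGroup E] [InnerProductSpace 𝕜 E]
    {u : E} (hu : ‖u‖ = 1) (x : E) (c : 𝕜) :
    ‖x - inner 𝕜 u x • u‖ ≤ ‖x - c • u‖ := by
  rw [← Submodule.starProjection_unit_singleton 𝕜 hu, Submodule.starProjection_minimal]
  exact ciInf_le (f := fun v : 𝕜 ∙ u => ‖x - v‖) ⟨0, Set.forall_mem_range.mpr fun _ => norm_nonneg _⟩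
    ⟨c • u, Submodule.smul_mem _ c (Submodule.mem_span_singleton_self u)⟩

theorem ContinuousLinearMap.abs_real_inner_map_self_le
    {E : Type*} [NormedAddCommGroup E] [InnerProductSpace ℝ E] (T : E →L[ℝ] E) (x : E) :
    |⟪T x, x⟫| ≤ ‖T‖ * ‖x‖ ^ 2 :=
  calc |⟪T x, x⟫| ≤ ‖T x‖ * ‖x‖ := abs_real_inner_le_norm _ _
    _ ≤ ‖T‖ * ‖x‖ * ‖x‖ := by gcongr; exact T.le_opNorm x
    _ = ‖T‖ * ‖x‖ ^ 2 := by ring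

theorem ContinuousLinearMap.norm_sub_smul_one_le
    {𝕜 E : Type*} [NontriviallyNormedField 𝕜] [SeminormedAddCommGroup E] [NormedSpace 𝕜 E]
    (T : E →L[𝕜] E) (c : 𝕜) :
    ‖T - c • (1 : E →L[𝕜] E)‖ ≤ ‖T‖ + ‖c‖ :=
  calc ‖T - c • (1 : E →L[𝕜] E)‖ ≤ ‖T‖ + ‖c‖ * ‖(1 : E →L[𝕜] E)‖ :=
        (norm_sub_le _ _).trans_eq (by rw [norm_smul])
    _ ≤ ‖T‖ + ‖c‖ := by
        gcongr
        exact mul_le_of_le_one_right (norm_nonneg c) ContinuousLinearMap.norm_id_le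

theorem eigenvalue_perturbation_remainder_bound_general
    {H : Type*} [NormedAddCommGroup H] [InnerProductSpace ℝ H] [CompleteSpace H]
    (C Chat : H →L[ℝ] H)
    (hChat : IsSelfAdjoint Chat)
    (lam lamhat M : ℝ) (phi phihat : H)
    (hphi : ‖phi‖ = 1) (hphihat : ‖phihat‖ = 1)
    (heighat : Chat phihat = lamhat • phihat)
    (hlam : ⟪C phi, phi⟫ = lam)
    (hM1 : ‖Chat‖ ≤ M) (hM2 : |lamhat| ≤ M) :
    |lamhat - lam - ⟪Chat phi - C phi, phi⟫|
        ≤ 2 * M * ‖(⟪phihat, phi⟫ • phihat - ⟪phi, phi⟫ • phi : H)‖ ^ 2 ∧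
    2 * M * ‖(⟪phihat, phi⟫ • phihat - ⟪phi, phi⟫ • phi : H)‖ ^ 2
        ≤ 2 * M * ‖phihat - phi‖ ^ 2 := by
  set S := Chat - lamhat • (1 : H →L[ℝ] H)
  have hS : (S : H →ₗ[ℝ] H).IsSymmetric :=
    (hChat.sub ((IsSelfAdjoint.all lamhat).smul (IsSelfAdjoint.one _))).isSymmetric
  have hSu : S phihat = 0 := by simp [S, heighat]
  have hSnorm : ‖S‖ ≤ 2 * M := by
    have := Chat.norm_sub_smul_one_le lamhat
    rw [Real.norm_eq_abs] at this
    linarith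
  have hunit : ⟪phi, phi⟫ = (1 : ℝ) := by rw [real_inner_self_eq_norm_sq, hphi, one_pow]
  have hresidual : lamhat - lam - ⟪Chat phi - C phi, phi⟫ = -⟪S phi, phi⟫ := by
    simp [S, inner_sub_left, real_inner_smul_left, hlam, hphi]
  set w := phi - ⟪phihat, phi⟫ • phihat
  have hw : ‖(⟪phihat, phi⟫ • phihat - ⟪phi, phi⟫ • phi : H)‖ = ‖w‖ := by
    rw [hunit, one_smul, norm_sub_rev]
  have hcomponent : ⟪S w, w⟫ = ⟪S phi, phi⟫ := hS.inner_map_sub_smul_self_of_map_eq_zero hSu phi _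
  rw [hw, hresidual, abs_neg, ← hcomponent]
  have hM : 0 ≤ M := (abs_nonneg _).trans hM2
  refine ⟨(S.abs_real_inner_map_self_le w).trans (by gcongr), ?_⟩
  gcongr
  simpa [norm_sub_rev phihat] using norm_sub_inner_smul_le_norm_sub_smul hphihat phi (1 : ℝ)

/-- Quadratic remainder bound for the eigenvalue perturbation: if ‖Ĉ‖ ≤ M and |λ̂_j| ≤ M,
then |λ̂_j − λ_j − ⟨(Ĉ−C)φ_j, φ_j⟩| ≤ 2M‖(P̂_j−P_j)φ_j‖² ≤ 2M‖φ̂_j−φ_j‖². -/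
theorem eigenvalue_perturbation_remainder_bound
    {H : Type*} [NormedAddCommGroup H] [InnerProductSpace ℝ H] [CompleteSpace H]
    (C Chat : H →L[ℝ] H)
    (hC : IsSelfAdjoint C) (hCcp : IsCompactOperator C)
    (hChat : IsSelfAdjoint Chat) (hChatcp : IsCompactOperator Chat)
    (lam lamhat M : ℝ) (phi phihat : H)
    (hphi : ‖phi‖ = 1) (hphihat : ‖phihat‖ = 1)
    (heig : C phi = lam • phi)
    (heighat : Chat phihat = lamhat • phihat)
    (hlam : ⟪C phi, phi⟫ = lam)
    (hsign : ⟪phihat, phi⟫ ≥ 0)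
    (hM1 : ‖Chat‖ ≤ M) (hM2 : |lamhat| ≤ M) :
    |lamhat - lam - ⟪Chat phi - C phi, phi⟫|
        ≤ 2 * M * ‖(⟪phihat, phi⟫ • phihat - ⟪phi, phi⟫ • phi : H)‖ ^ 2 ∧
    2 * M * ‖(⟪phihat, phi⟫ • phihat - ⟪phi, phi⟫ • phi : H)‖ ^ 2
        ≤ 2 * M * ‖phihat - phi‖ ^ 2 :=
  eigenvalue_perturbation_remainder_bound_general C Chat hChat lam lamhat M phi phihat hphi hphihat
    heighat hlam hM1 hM2
end
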